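/- For every real number μ with μ < 0: (i) maxS(μ,β) ≥ √(1−μ) − 1 for all β ∈ ℝ; (ii) maxS(μ, βopt(μ)) = √(1−μ) − 1, where βopt(μ) = (1−√(1−μ))/(1+√(1−μ)) < 0; (iii) if maxS(μ,β) = √(1−μ) − 1 for some β ∈ ℝ, then β = βopt(μ). In particular min_{β∈ℝ} maxS(μ,β) = √(1−μ) − 1 with unique minimizer βopt(μ). -/

import Mathlib

/-- The maximum of the moduli of the two complex roots (counted with multiplicity) of
`λ² − (1+β)·μ·λ + β·μ = 0`; the roots are given by the quadratic formula
`((1+β)μ ± √((1+β)²μ² − 4βμ))/2` (complex square root via `cpow`). -/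
noncomputable def maxS (μ β : ℝ) : ℝ :=
  max (norm (((((1 + β) * μ : ℝ) : ℂ) +
        ((((1 + β) ^ 2 * μ ^ 2 - 4 * β * μ : ℝ) : ℂ)) ^ ((1 : ℂ) / 2)) / 2))
      (norm (((((1 + β) * μ : ℝ) : ℂ) -
        ((((1 + β) ^ 2 * μ ^ 2 - 4 * β * μ : ℝ) : ℂ)) ^ ((1 : ℂ) / 2)) / 2))

/-- The optimal coefficient `βopt(μ) = (1 − √(1−μ))/(1 + √(1−μ))`. -/
noncomputable def βopt (μ : ℝ) : ℝ := (1 - Real.sqrt (1 - μ)) / (1 + Real.sqrt (1 - μ))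

/-!
The roots `λ₁, λ₂` satisfy `λ₁ + λ₂ = (1+β)μ` and `λ₁λ₂ = βμ`, so
`(1 - λ₁)(1 - λ₂) = 1 - (1+β)μ + βμ = 1 - μ` whatever `β` is. With `M = maxS μ β`,
`1 - μ ≤ 1 + |λ₁ + λ₂| + |λ₁λ₂| ≤ (1 + M)²`, which is the lower bound `√(1-μ) - 1 ≤ M`.
If `M = √(1-μ) - 1`, both inequalities `-(1+β)μ ≤ 2M` and `βμ ≤ M²` must be equalities,
which pins down `(1+β)μ = 2(1 - √(1-μ))` and hence `β`.
-/

lemma quadratic_roots_mul (a p : ℝ) :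
    ((a : ℂ) + ((a ^ 2 - 4 * p : ℝ) : ℂ) ^ ((1 : ℂ) / 2)) / 2 *
      (((a : ℂ) - ((a ^ 2 - 4 * p : ℝ) : ℂ) ^ ((1 : ℂ) / 2)) / 2) = p := by
  have hsqrt : (((a ^ 2 - 4 * p : ℝ) : ℂ) ^ ((1 : ℂ) / 2)) ^ 2 = ((a ^ 2 - 4 * p : ℝ) : ℂ) := by
    rw [one_div, Complex.cpow_ofNat_inv_pow]
  linear_combination (norm := (push_cast; ring)) (-1 / 4 : ℂ) * hsqrt

lemma norm_add_le_two_mul_max (z w : ℂ) : ‖z + w‖ ≤ 2 * max ‖z‖ ‖w‖ := by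
  linarith [norm_add_le z w, le_max_left ‖z‖ ‖w‖, le_max_right ‖z‖ ‖w‖]

lemma norm_mul_le_max_sq (z w : ℂ) : ‖z * w‖ ≤ max ‖z‖ ‖w‖ ^ 2 := by
  rw [norm_mul, sq]
  exact mul_le_mul (le_max_left _ _) (le_max_right _ _) (norm_nonneg _)
    ((norm_nonneg _).trans (le_max_left _ _))

/-- The largest modulus of a root of `X² - a X + p`. -/
noncomputable def maxRootNorm (a p : ℝ) : ℝ :=
  max ‖((a : ℂ) + ((a ^ 2 - 4 * p : ℝ) : ℂ) ^ ((1 : ℂ) / 2)) / 2‖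
    ‖((a : ℂ) - ((a ^ 2 - 4 * p : ℝ) : ℂ) ^ ((1 : ℂ) / 2)) / 2‖

section maxRootNorm

variable (a p : ℝ)

lemma maxRootNorm_nonneg : 0 ≤ maxRootNorm a p :=
  (norm_nonneg _).trans (le_max_left _ _)

lemma neg_le_two_mul_maxRootNorm : -a ≤ 2 * maxRootNorm a p := by
  have hsum := norm_add_le_two_mul_max
    (((a : ℂ) + ((a ^ 2 - 4 * p : ℝ) : ℂ) ^ ((1 : ℂ) / 2)) / 2)
    (((a : ℂ) - ((a ^ 2 - 4 * p : ℝ) : ℂ) ^ ((1 : ℂ) / 2)) / 2)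
  rw [show ∀ z w : ℂ, (z + w) / 2 + (z - w) / 2 = z from fun z w ↦ by ring, Complex.norm_real,
    Real.norm_eq_abs] at hsum
  exact (neg_le_abs a).trans hsum

lemma le_maxRootNorm_sq : p ≤ maxRootNorm a p ^ 2 := by
  have hprod := norm_mul_le_max_sq
    (((a : ℂ) + ((a ^ 2 - 4 * p : ℝ) : ℂ) ^ ((1 : ℂ) / 2)) / 2)
    (((a : ℂ) - ((a ^ 2 - 4 * p : ℝ) : ℂ) ^ ((1 : ℂ) / 2)) / 2)
  rw [quadratic_roots_mul, Complex.norm_real, Real.norm_eq_abs] at hprod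
  exact (le_abs_self p).trans hprod

lemma maxRootNorm_of_sq_eq (h : a ^ 2 = 4 * p) : maxRootNorm a p = |a| / 2 := by
  simp only [maxRootNorm, sub_eq_zero.mpr h, Complex.ofReal_zero,
    Complex.zero_cpow (one_div_ne_zero (two_ne_zero' ℂ)), add_zero, sub_zero, max_self]
  rw [norm_div, Complex.norm_real, Real.norm_eq_abs, Complex.norm_two]

end maxRootNorm

lemma maxS_eq_maxRootNorm (μ β : ℝ) : maxS μ β = maxRootNorm ((1 + β) * μ) (β * μ) := by
  rw [maxS, maxRootNorm, show ((1 + β) * μ) ^ 2 - 4 * (β * μ) = (1 + β) ^ 2 * μ ^ 2 - 4 * β * μ by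
    ring]

lemma one_sub_le_one_add_maxS_sq (μ β : ℝ) : 1 - μ ≤ (1 + maxS μ β) ^ 2 := by
  rw [maxS_eq_maxRootNorm]
  nlinarith [neg_le_two_mul_maxRootNorm ((1 + β) * μ) (β * μ),
    le_maxRootNorm_sq ((1 + β) * μ) (β * μ)]

lemma sqrt_one_sub_sub_one_le_maxS (μ β : ℝ) : Real.sqrt (1 - μ) - 1 ≤ maxS μ β := by
  have hnonneg : 0 ≤ 1 + maxS μ β := by
    linarith [maxS_eq_maxRootNorm μ β ▸ maxRootNorm_nonneg ((1 + β) * μ) (β * μ)]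
  linarith [(Real.sqrt_le_left hnonneg).mpr (one_sub_le_one_add_maxS_sq μ β)]

section βopt

variable {μ : ℝ}

lemma one_add_βopt_mul (hμ : μ ≤ 1) : (1 + βopt μ) * μ = 2 * (1 - Real.sqrt (1 - μ)) := by
  have hsq := Real.sq_sqrt (sub_nonneg.mpr hμ)
  have hpos : 0 < 1 + Real.sqrt (1 - μ) := by positivity
  rw [βopt]
  field_simp
  linear_combination 2 * hsq

lemma βopt_neg (hμ : μ < 0) : βopt μ < 0 := by
  refine div_neg_of_neg_of_pos (sub_neg.mpr ?_) (by positivity)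
  exact Real.lt_sqrt_of_sq_lt (by linarith)

lemma maxS_βopt (hμ : μ ≤ 0) : maxS μ (βopt μ) = Real.sqrt (1 - μ) - 1 := by
  have hsq := Real.sq_sqrt (show 0 ≤ 1 - μ by linarith)
  have hs : 1 ≤ Real.sqrt (1 - μ) := Real.one_le_sqrt.mpr (by linarith)
  have ha := one_add_βopt_mul (show μ ≤ 1 by linarith)
  have hp : βopt μ * μ = (1 - Real.sqrt (1 - μ)) ^ 2 := by linear_combination ha - hsq
  rw [maxS_eq_maxRootNorm, maxRootNorm_of_sq_eq _ _ (by rw [ha, hp]; ring), ha,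
    abs_of_nonpos (by linarith)]
  ring

lemma eq_βopt_of_maxS_eq {β : ℝ} (hμ : μ < 0) (h : maxS μ β = Real.sqrt (1 - μ) - 1) :
    β = βopt μ := by
  have hsq := Real.sq_sqrt (show 0 ≤ 1 - μ by linarith)
  have hsum := neg_le_two_mul_maxRootNorm ((1 + β) * μ) (β * μ)
  have hprod := le_maxRootNorm_sq ((1 + β) * μ) (β * μ)
  rw [← maxS_eq_maxRootNorm, h] at hsum hprod
  have ha : (1 + β) * μ = (1 + βopt μ) * μ := by
    rw [one_add_βopt_mul (by linarith)]
    linarith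
  linarith [mul_right_cancel₀ hμ.ne ha]

end βopt

theorem stmt3 (μ : ℝ) (h : μ < 0) :
    (∀ β : ℝ, Real.sqrt (1 - μ) - 1 ≤ maxS μ β) ∧
    maxS μ (βopt μ) = Real.sqrt (1 - μ) - 1 ∧
    βopt μ < 0 ∧
    (∀ β : ℝ, maxS μ β = Real.sqrt (1 - μ) - 1 → β = βopt μ) :=
  ⟨sqrt_one_sub_sub_one_le_maxS μ, maxS_βopt h.le, βopt_neg h, fun _ ↦ eq_βopt_of_maxS_eq h⟩
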